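/- Let L be a bounded lattice equipped with unary operations ¬, □, ◇ where ¬ is antitone with ¬1 = 0, □ is multiplicative (□(a ∧ b) = □a ∧ □b and □1 = 1), and ◇ is additive (◇(a ∨ b) = ◇a ∨ ◇b and ◇0 = 0). Define X = {(F, I) : F is a filter in L, I is an ideal in L, and {¬a : a ∈ F} ⊆ I}, with (F,I) ◁ (F',I') iff I ∩ F' = ∅; (F,I) R (F',I') iff for all a ∈ L, □a ∈ F implies a ∈ F'; and (F,I) Q (F',I') iff for all a ∈ L, ◇a ∈ I implies a ∈ I'. Then: (i) (X, ◁, R, Q) is an additive modal frame; (ii) the map a ↦ â = {(F,I) ∈ X : a ∈ F} is an injective bounded-lattice homomorphism into the complete lattice of c_◁-fixpoints of (X, ◁) satisfying (¬a)^ = ¬_◁(â), (□a)^ = □_R(â), and (◇a)^ = ◇_Q(â); and (iii) the image {â : a ∈ L} is exactly the set of c_◁-fixpoints that are compact open in the topology on X generated by {â : a ∈ L}. -/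

import Mathlib

/-- The closure operator `c_◁` of a relational frame `(X, ◁)`, where `lt y x` means `y ◁ x`. -/
def clOp {X : Type*} (lt : X → X → Prop) (A : Set X) : Set X :=
  {x | ∀ y, lt y x → ∃ z, lt y z ∧ z ∈ A}

/-- The negation operation `¬_◁` of a relational frame. -/
def ngOp {X : Type*} (lt : X → X → Prop) (A : Set X) : Set X :=
  {x | ∀ y, lt y x → y ∉ A}

/-- The necessity operation `□_R`. -/
def boxOp {X : Type*} (R : X → X → Prop) (A : Set X) : Set X :=
  {x | ∀ y, R x y → y ∈ A}

/-- The possibility operation `◇_Q`. -/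
def diaOp {X : Type*} (lt Q : X → X → Prop) (A : Set X) : Set X :=
  {x | ∀ x', lt x' x → ∃ y' y, Q x' y' ∧ lt y' y ∧ y ∈ A}

/-- The defining condition of a modal frame (interaction of `R` and `◁`). -/
def IsModalFrame {X : Type*} (lt R : X → X → Prop) : Prop :=
  ∀ x y z, R x y → lt z y →
    ∃ x', lt x' x ∧ ∀ x'', lt x' x'' → ∃ y'', R x'' y'' ∧ lt z y''

/-- The additivity condition of a modal frame (interaction of `Q` and `◁`). -/
def IsAdditiveFrame {X : Type*} (lt Q : X → X → Prop) : Prop :=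
  ∀ x y z, Q x y → lt y z →
    ∃ x', lt x x' ∧ ∀ x'', lt x'' x' → ∃ y'', Q x'' y'' ∧ lt y'' z

/-- The negativity condition of a modal frame. -/
def IsNegativeFrame {X : Type*} (lt R Q : X → X → Prop) : Prop :=
  ∀ x y z, R x y → lt z y →
    ∃ x', lt x' x ∧ ∀ x'', lt x'' x' → ∃ y'', Q x'' y'' ∧ lt y'' z

/-- `z` pre-refines `x`. -/
def PreRefines {X : Type*} (lt : X → X → Prop) (z x : X) : Prop :=
  ∀ w, lt w z → lt w x

/-- `◁` is pseudo-reflexive. -/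
def PseudoRefl {X : Type*} (lt : X → X → Prop) : Prop :=
  ∀ x, (∃ y, lt y x) → ∃ z, lt z x ∧ PreRefines lt z x

/-- `◁` is pseudo-symmetric. -/
def PseudoSymm {X : Type*} (lt : X → X → Prop) : Prop :=
  ∀ x y, lt y x → ∃ z, lt z y ∧ PreRefines lt z x

/-- A filter in a bounded lattice: nonempty, upward closed, closed under binary meets. -/
def IsFilt {L : Type*} [Lattice L] [BoundedOrder L] (F : Set L) : Prop :=
  F.Nonempty ∧ (∀ a b : L, a ∈ F → a ≤ b → b ∈ F) ∧ (∀ a b : L, a ∈ F → b ∈ F → a ⊓ b ∈ F)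

/-- An ideal in a bounded lattice: nonempty, downward closed, closed under binary joins. -/
def IsIdl {L : Type*} [Lattice L] [BoundedOrder L] (I : Set L) : Prop :=
  I.Nonempty ∧ (∀ a b : L, a ∈ I → b ≤ a → b ∈ I) ∧ (∀ a b : L, a ∈ I → b ∈ I → a ⊔ b ∈ I)

/-- The set of filter-ideal pairs `(F,I)` with `{¬a : a ∈ F} ⊆ I`. -/
def FIX {L : Type*} [Lattice L] [BoundedOrder L] (neg : L → L) : Type _ :=
  {p : Set L × Set L // IsFilt p.1 ∧ IsIdl p.2 ∧ ∀ a ∈ p.1, neg a ∈ p.2}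

/-- `(F,I) ◁ (F',I')` iff `I ∩ F' = ∅`. -/
def fiLt {L : Type*} [Lattice L] [BoundedOrder L] (neg : L → L) (x y : FIX neg) : Prop :=
  x.1.2 ∩ y.1.1 = ∅

/-- The map `a ↦ â = {(F,I) : a ∈ F}`. -/
def fhat {L : Type*} [Lattice L] [BoundedOrder L] (neg : L → L) (a : L) : Set (FIX neg) :=
  {x | a ∈ x.1.1}

/-- `(F,I) R (F',I')` iff for all `a`, `□a ∈ F` implies `a ∈ F'`. -/
def fiR {L : Type*} [Lattice L] [BoundedOrder L] (neg Box : L → L) (x y : FIX neg) : Prop :=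
  ∀ a : L, Box a ∈ x.1.1 → a ∈ y.1.1

/-- `(F,I) Q (F',I')` iff for all `a`, `◇a ∈ I` implies `a ∈ I'`. -/
def fiQ {L : Type*} [Lattice L] [BoundedOrder L] (neg Dia : L → L) (x y : FIX neg) : Prop :=
  ∀ a : L, Dia a ∈ x.1.2 → a ∈ y.1.2

/-!
Every witness needed is an explicit filter–ideal pair. The principal pair `(↑a, ↓¬a)` lies in
`â`, and `y ◁ (↑a, ↓¬a)` holds exactly when `a ∉ I_y`; a pair `(↑⊤, I)` exists for every ideal
`I` (because `¬⊤ = ⊥`) and a pair `(F, L)` for every filter `F`. The modal witnesses are such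
pairs built from preimages of filters and ideals under `□`, `◇` and from the closures of their
images.

For (iii): the sets `â` are closed under binary intersection, so they form a basis. Each `â` is
compact because every basic open set containing `(↑a, ↓¬a)` contains `â`. A compact open set is
then a finite union of sets `âᵢ`, and if it is a `c_◁`-fixpoint it equals the closure of that
union, which is the hat of `⨆ aᵢ`.
-/

open Set TopologicalSpace Filter Topology

section RelationalFrame

variable {X : Type*} (lt : X → X → Prop)

lemma subset_clOp (A : Set X) : A ⊆ clOp lt A := fun x hx _ hy => ⟨x, hy, hx⟩

variable {lt} in
lemma clOp_mono {A B : Set X} (h : A ⊆ B) : clOp lt A ⊆ clOp lt B := fun x hx y hy => by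
  obtain ⟨z, hyz, hz⟩ := hx y hy
  exact ⟨z, hyz, h hz⟩

lemma clOp_clOp (A : Set X) : clOp lt (clOp lt A) = clOp lt A := by
  refine subset_antisymm (fun x hx y hy => ?_) (subset_clOp lt _)
  obtain ⟨z, hyz, hz⟩ := hx y hy
  exact hz y hyz

lemma clOp_union_clOp (A B : Set X) : clOp lt (A ∪ clOp lt B) = clOp lt (A ∪ B) := by
  refine subset_antisymm ?_ (clOp_mono (union_subset_union_right A (subset_clOp lt B)))
  calc clOp lt (A ∪ clOp lt B)
      ⊆ clOp lt (clOp lt (A ∪ B)) :=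
        clOp_mono (union_subset (subset_union_left.trans (subset_clOp lt _))
          (clOp_mono subset_union_right))
    _ = clOp lt (A ∪ B) := clOp_clOp lt _

end RelationalFrame

lemma isCompact_of_principal_le_nhds {X : Type*} [TopologicalSpace X] {U : Set X} {p : X}
    (hp : p ∈ U) (h : 𝓟 U ≤ 𝓝 p) : IsCompact U :=
  fun _ _ hf => ⟨p, hp, ClusterPt.of_le_nhds (hf.trans h)⟩

section FiltersAndIdeals

variable {α β : Type*} [Lattice α] [BoundedOrder α] [Lattice β] [BoundedOrder β]
  {F I : Set α} {a b : α}

lemma IsFilt.mem_of_le (hF : IsFilt F) (ha : a ∈ F) (hab : a ≤ b) : b ∈ F := hF.2.1 a b ha hab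

lemma IsFilt.inf_mem (hF : IsFilt F) (ha : a ∈ F) (hb : b ∈ F) : a ⊓ b ∈ F := hF.2.2 a b ha hb

lemma IsFilt.top_mem (hF : IsFilt F) : ⊤ ∈ F :=
  let ⟨_, hc⟩ := hF.1
  hF.mem_of_le hc le_top

lemma IsIdl.mem_of_le (hI : IsIdl I) (ha : a ∈ I) (hba : b ≤ a) : b ∈ I := hI.2.1 a b ha hba

lemma IsIdl.sup_mem (hI : IsIdl I) (ha : a ∈ I) (hb : b ∈ I) : a ⊔ b ∈ I := hI.2.2 a b ha hb

lemma IsIdl.bot_mem (hI : IsIdl I) : ⊥ ∈ I :=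
  let ⟨_, hc⟩ := hI.1
  hI.mem_of_le hc bot_le

lemma isFilt_Ici (a : α) : IsFilt (Ici a) :=
  ⟨nonempty_Ici, fun _ _ h h' => h.trans h', fun _ _ => le_inf⟩

lemma isIdl_Iic (a : α) : IsIdl (Iic a) :=
  ⟨nonempty_Iic, fun _ _ h h' => h'.trans h, fun _ _ => sup_le⟩

lemma isIdl_univ : IsIdl (univ : Set α) :=
  ⟨univ_nonempty, fun _ _ _ _ => trivial, fun _ _ _ _ => trivial⟩

lemma IsFilt.preimage {F : Set β} (hF : IsFilt F) {f : α → β}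
    (hf : ∀ a b, f (a ⊓ b) = f a ⊓ f b) (htop : f ⊤ = ⊤) : IsFilt (f ⁻¹' F) :=
  ⟨⟨⊤, by simpa only [mem_preimage, htop] using hF.top_mem⟩,
    fun _ _ ha hab => hF.mem_of_le ha (Monotone.of_map_inf hf hab),
    fun a b ha hb => by simpa only [mem_preimage, hf] using hF.inf_mem ha hb⟩

lemma IsIdl.preimage {I : Set β} (hI : IsIdl I) {f : α → β}
    (hf : ∀ a b, f (a ⊔ b) = f a ⊔ f b) (hbot : f ⊥ = ⊥) : IsIdl (f ⁻¹' I) :=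
  ⟨⟨⊥, by simpa only [mem_preimage, hbot] using hI.bot_mem⟩,
    fun _ _ ha hba => hI.mem_of_le ha (Monotone.of_map_sup hf hba),
    fun a b ha hb => by simpa only [mem_preimage, hf] using hI.sup_mem ha hb⟩

lemma IsFilt.upperClosure_image (hF : IsFilt F) {f : α → β} (hf : Monotone f) :
    IsFilt (upperClosure (f '' F) : Set β) :=
  ⟨(hF.1.image f).mono subset_upperClosure,
    fun _ _ ha hab => (upperClosure _).upper hab ha,
    fun _ _ ⟨_, ⟨c, hc, hcd⟩, hd⟩ ⟨_, ⟨c', hc', hce⟩, he⟩ =>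
      ⟨f (c ⊓ c'), mem_image_of_mem f (hF.inf_mem hc hc'),
        (hf.map_inf_le c c').trans (inf_le_inf (hcd ▸ hd) (hce ▸ he))⟩⟩

lemma IsIdl.lowerClosure_image (hI : IsIdl I) {f : α → β} (hf : Monotone f) :
    IsIdl (lowerClosure (f '' I) : Set β) :=
  ⟨(hI.1.image f).mono subset_lowerClosure,
    fun _ _ ha hba => (lowerClosure _).lower hba ha,
    fun _ _ ⟨_, ⟨c, hc, hcd⟩, hd⟩ ⟨_, ⟨c', hc', hce⟩, he⟩ =>
      ⟨f (c ⊔ c'), mem_image_of_mem f (hI.sup_mem hc hc'),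
        (sup_le_sup (hcd ▸ hd) (hce ▸ he)).trans (hf.le_map_sup c c')⟩⟩

end FiltersAndIdeals

namespace FIX

variable {L : Type*} [Lattice L] [BoundedOrder L] {neg : L → L}

lemma isFilt (x : FIX neg) : IsFilt x.1.1 := x.2.1

lemma isIdl (x : FIX neg) : IsIdl x.1.2 := x.2.2.1

lemma neg_mem (x : FIX neg) {a : L} (ha : a ∈ x.1.1) : neg a ∈ x.1.2 := x.2.2.2 a ha

def ofFilt (F : Set L) (hF : IsFilt F) : FIX neg :=
  ⟨(F, univ), hF, isIdl_univ, fun _ _ => trivial⟩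

def ofIdl (hneg1 : neg ⊤ = ⊥) (I : Set L) (hI : IsIdl I) : FIX neg :=
  ⟨(Ici ⊤, I), isFilt_Ici ⊤, hI, fun b hb => by
    rw [top_le_iff.1 hb, hneg1]
    exact hI.bot_mem⟩

def principal (hneg : ∀ a b : L, a ≤ b → neg b ≤ neg a) (a : L) : FIX neg :=
  ⟨(Ici a, Iic (neg a)), isFilt_Ici a, isIdl_Iic (neg a), fun b hb => hneg a b hb⟩

end FIX

section Representation

variable {L : Type*} [Lattice L] [BoundedOrder L] {neg : L → L}

lemma fiLt_iff {x y : FIX neg} : fiLt neg x y ↔ ∀ c ∈ x.1.2, c ∉ y.1.1 := by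
  simp only [fiLt, eq_empty_iff_forall_notMem, mem_inter_iff, not_and]

lemma fiLt_iff_of_snd_eq_Iic {x y : FIX neg} {a : L} (hx : x.1.2 = Iic a) :
    fiLt neg x y ↔ a ∉ y.1.1 := by
  rw [fiLt_iff, hx]
  exact ⟨fun h => h a le_rfl, fun h c hca hc => h (y.isFilt.mem_of_le hc hca)⟩

lemma fiLt_iff_of_fst_eq_Ici {x y : FIX neg} {a : L} (hy : y.1.1 = Ici a) :
    fiLt neg x y ↔ a ∉ x.1.2 := by
  rw [fiLt_iff, hy]
  exact ⟨fun h ha => h a ha le_rfl, fun h c hc hac => h (x.isIdl.mem_of_le hc hac)⟩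

lemma principal_mem_fhat (hneg : ∀ a b : L, a ≤ b → neg b ≤ neg a) (a : L) :
    FIX.principal hneg a ∈ fhat neg a :=
  le_refl a

lemma fhat_mono {a b : L} (h : a ≤ b) : fhat neg a ⊆ fhat neg b :=
  fun x hx => x.isFilt.mem_of_le hx h

lemma fhat_inf (a b : L) : fhat neg (a ⊓ b) = fhat neg a ∩ fhat neg b :=
  subset_antisymm (subset_inter (fhat_mono inf_le_left) (fhat_mono inf_le_right))
    fun x hx => x.isFilt.inf_mem hx.1 hx.2

lemma fhat_top : fhat neg (⊤ : L) = univ :=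
  eq_univ_of_forall fun x => x.isFilt.top_mem

lemma fhat_injective (hneg : ∀ a b : L, a ≤ b → neg b ≤ neg a) :
    Function.Injective (fhat neg) := by
  intro a b h
  have hab : FIX.principal hneg a ∈ fhat neg b := h ▸ principal_mem_fhat hneg a
  have hba : FIX.principal hneg b ∈ fhat neg a := h ▸ principal_mem_fhat hneg b
  exact le_antisymm hab hba

lemma clOp_fhat (hneg1 : neg ⊤ = ⊥) (a : L) : clOp (fiLt neg) (fhat neg a) = fhat neg a := by
  refine subset_antisymm (fun x hx => ?_) (subset_clOp _ _)
  by_contra ha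
  have hlt : fiLt neg (FIX.ofIdl hneg1 (Iic a) (isIdl_Iic a)) x :=
    (fiLt_iff_of_snd_eq_Iic rfl).2 ha
  obtain ⟨z, hz, hza⟩ := hx _ hlt
  exact (fiLt_iff_of_snd_eq_Iic rfl).1 hz hza

lemma fhat_bot (hneg1 : neg ⊤ = ⊥) : fhat neg (⊥ : L) = clOp (fiLt neg) ∅ := by
  refine subset_antisymm (fun x hx y hy => ?_) ?_
  · exact absurd hx (fiLt_iff.1 hy ⊥ y.isIdl.bot_mem)
  · exact (clOp_mono (empty_subset _)).trans (clOp_fhat hneg1 ⊥).subset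

lemma fhat_sup (hneg : ∀ a b : L, a ≤ b → neg b ≤ neg a) (hneg1 : neg ⊤ = ⊥) (a b : L) :
    fhat neg (a ⊔ b) = clOp (fiLt neg) (fhat neg a ∪ fhat neg b) := by
  refine subset_antisymm (fun x hx y hy => ?_) ?_
  · have hab : a ∉ y.1.2 ∨ b ∉ y.1.2 := by
      by_contra! h
      exact fiLt_iff.1 hy _ (y.isIdl.sup_mem h.1 h.2) hx
    rcases hab with ha | hb
    · exact ⟨_, (fiLt_iff_of_fst_eq_Ici rfl).2 ha, Or.inl (principal_mem_fhat hneg a)⟩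
    · exact ⟨_, (fiLt_iff_of_fst_eq_Ici rfl).2 hb, Or.inr (principal_mem_fhat hneg b)⟩
  · rw [← clOp_fhat hneg1 (a ⊔ b)]
    exact clOp_mono (union_subset (fhat_mono le_sup_left) (fhat_mono le_sup_right))

lemma fhat_neg (hneg : ∀ a b : L, a ≤ b → neg b ≤ neg a) (a : L) :
    fhat neg (neg a) = ngOp (fiLt neg) (fhat neg a) := by
  refine subset_antisymm (fun x hx y hy hya => fiLt_iff.1 hy _ (y.neg_mem hya) hx) fun x hx => ?_
  by_contra hna
  exact hx _ ((fiLt_iff_of_snd_eq_Iic rfl).2 hna) (principal_mem_fhat hneg a)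

lemma fhat_box {Box : L → L} (hBoxMul : ∀ a b : L, Box (a ⊓ b) = Box a ⊓ Box b)
    (hBoxTop : Box ⊤ = ⊤) (a : L) :
    fhat neg (Box a) = boxOp (fiR neg Box) (fhat neg a) :=
  subset_antisymm (fun _ hx _ hxy => hxy a hx)
    fun x hx => hx (FIX.ofFilt _ (x.isFilt.preimage hBoxMul hBoxTop)) fun _ h => h

lemma fhat_dia (hneg : ∀ a b : L, a ≤ b → neg b ≤ neg a) (hneg1 : neg ⊤ = ⊥)
    {Dia : L → L} (hDiaAdd : ∀ a b : L, Dia (a ⊔ b) = Dia a ⊔ Dia b)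
    (hDiaBot : Dia ⊥ = ⊥) (a : L) :
    fhat neg (Dia a) = diaOp (fiLt neg) (fiQ neg Dia) (fhat neg a) := by
  refine subset_antisymm (fun x hx x' hx' => ?_) fun x hx => ?_
  · refine ⟨FIX.ofIdl hneg1 _ (x'.isIdl.preimage hDiaAdd hDiaBot), FIX.principal hneg a,
      fun _ h => h, (fiLt_iff_of_fst_eq_Ici rfl).2 fun ha => ?_, principal_mem_fhat hneg a⟩
    exact fiLt_iff.1 hx' _ ha hx
  · by_contra hd
    obtain ⟨_, y, hQ, hlt, hy⟩ :=
      hx (FIX.ofIdl hneg1 _ (isIdl_Iic (Dia a))) ((fiLt_iff_of_snd_eq_Iic rfl).2 hd)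
    exact fiLt_iff.1 hlt a (hQ a le_rfl) hy

lemma isModalFrame_fiLt_fiR (hneg1 : neg ⊤ = ⊥) {Box : L → L}
    (hBoxMul : ∀ a b : L, Box (a ⊓ b) = Box a ⊓ Box b) (hBoxTop : Box ⊤ = ⊤) :
    IsModalFrame (fiLt neg) (fiR neg Box) := by
  intro x y z hxy hzy
  refine ⟨FIX.ofIdl hneg1 _ (z.isIdl.lowerClosure_image (Monotone.of_map_inf hBoxMul)),
    fiLt_iff.2 ?_, fun x'' hx'' => ?_⟩
  · rintro d ⟨_, ⟨c, hc, rfl⟩, hdc⟩ hd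
    exact fiLt_iff.1 hzy c hc (hxy c (x.isFilt.mem_of_le hd hdc))
  · refine ⟨FIX.ofFilt _ (x''.isFilt.preimage hBoxMul hBoxTop), fun _ h => h,
      fiLt_iff.2 fun c hc hbox => ?_⟩
    exact fiLt_iff.1 hx'' (Box c) (subset_lowerClosure (mem_image_of_mem Box hc)) hbox

lemma isAdditiveFrame_fiLt_fiQ (hneg1 : neg ⊤ = ⊥) {Dia : L → L}
    (hDiaAdd : ∀ a b : L, Dia (a ⊔ b) = Dia a ⊔ Dia b) (hDiaBot : Dia ⊥ = ⊥) :
    IsAdditiveFrame (fiLt neg) (fiQ neg Dia) := by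
  intro x y z hxy hyz
  refine ⟨FIX.ofFilt _ (z.isFilt.upperClosure_image (Monotone.of_map_sup hDiaAdd)),
    fiLt_iff.2 ?_, fun x'' hx'' => ?_⟩
  · rintro d hd ⟨_, ⟨c, hc, rfl⟩, hcd⟩
    exact fiLt_iff.1 hyz c (hxy c (x.isIdl.mem_of_le hd hcd)) hc
  · refine ⟨FIX.ofIdl hneg1 _ (x''.isIdl.preimage hDiaAdd hDiaBot), fun _ h => h,
      fiLt_iff.2 fun c hc hcz => ?_⟩
    exact fiLt_iff.1 hx'' (Dia c) hc (subset_upperClosure (mem_image_of_mem Dia hcz))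

lemma exists_fhat_eq_clOp_biUnion (hneg : ∀ a b : L, a ≤ b → neg b ≤ neg a)
    (hneg1 : neg ⊤ = ⊥) {s : Set L} (hs : s.Finite) :
    ∃ a, fhat neg a = clOp (fiLt neg) (⋃ b ∈ s, fhat neg b) := by
  induction s, hs using Set.Finite.induction_on with
  | empty => exact ⟨⊥, by rw [biUnion_empty, fhat_bot hneg1]⟩
  | @insert b s _ _ ih =>
    obtain ⟨a, ha⟩ := ih
    exact ⟨b ⊔ a, by rw [biUnion_insert, ← clOp_union_clOp, ← ha, fhat_sup hneg hneg1]⟩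

end Representation

section Topology

variable {L : Type*} [Lattice L] [BoundedOrder L] {neg : L → L}

lemma isTopologicalBasis_range_fhat :
    @IsTopologicalBasis (FIX neg) (generateFrom (range (fhat neg))) (range (fhat neg)) := by
  let := generateFrom (range (fhat neg))
  refine ⟨?_, ?_, rfl⟩
  · rintro _ ⟨a, rfl⟩ _ ⟨b, rfl⟩ x hx
    exact ⟨fhat neg (a ⊓ b), mem_range_self _, (fhat_inf a b).symm ▸ hx, (fhat_inf a b).le⟩
  · exact sUnion_eq_univ_iff.2 fun x => ⟨_, mem_range_self ⊤, x.isFilt.top_mem⟩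

variable [TopologicalSpace (FIX neg)] (hb : IsTopologicalBasis (range (fhat neg)))
include hb

lemma isCompact_fhat (hneg : ∀ a b : L, a ≤ b → neg b ≤ neg a) (a : L) :
    IsCompact (fhat neg a) := by
  refine isCompact_of_principal_le_nhds (principal_mem_fhat hneg a) ?_
  rw [hb.nhds_hasBasis.ge_iff]
  rintro _ ⟨⟨b, rfl⟩, hab⟩
  exact mem_principal.2 (fhat_mono hab)

lemma exists_fhat_eq_iff (hneg : ∀ a b : L, a ≤ b → neg b ≤ neg a) (hneg1 : neg ⊤ = ⊥)
    (A : Set (FIX neg)) :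
    (∃ a, fhat neg a = A) ↔ clOp (fiLt neg) A = A ∧ IsCompact A ∧ IsOpen A := by
  rw [isCompact_open_iff_eq_finite_iUnion_of_isTopologicalBasis _ hb (isCompact_fhat hb hneg)]
  constructor
  · rintro ⟨a, rfl⟩
    exact ⟨clOp_fhat hneg1 a, {a}, finite_singleton a, by rw [biUnion_singleton]⟩
  · rintro ⟨hA, s, hs, rfl⟩
    obtain ⟨a, ha⟩ := exists_fhat_eq_clOp_biUnion hneg hneg1 hs
    exact ⟨a, ha.trans hA⟩

end Topology

theorem stmt_10 {L : Type*} [Lattice L] [BoundedOrder L] (neg Box Dia : L → L)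
    (hneg : ∀ a b : L, a ≤ b → neg b ≤ neg a) (hneg1 : neg ⊤ = ⊥)
    (hBoxMul : ∀ a b : L, Box (a ⊓ b) = Box a ⊓ Box b) (hBoxTop : Box ⊤ = ⊤)
    (hDiaAdd : ∀ a b : L, Dia (a ⊔ b) = Dia a ⊔ Dia b) (hDiaBot : Dia ⊥ = ⊥) :
    (IsModalFrame (fiLt neg) (fiR neg Box) ∧
      IsAdditiveFrame (fiLt neg) (fiQ neg Dia)) ∧
    (Function.Injective (fhat neg) ∧
     (∀ a : L, clOp (fiLt neg) (fhat neg a) = fhat neg a) ∧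
     (∀ a b : L, fhat neg (a ⊓ b) = fhat neg a ∩ fhat neg b) ∧
     (∀ a b : L, fhat neg (a ⊔ b) = clOp (fiLt neg) (fhat neg a ∪ fhat neg b)) ∧
     fhat neg (⊤ : L) = (Set.univ : Set (FIX neg)) ∧
     fhat neg (⊥ : L) = clOp (fiLt neg) (∅ : Set (FIX neg)) ∧
     (∀ a : L, fhat neg (neg a) = ngOp (fiLt neg) (fhat neg a)) ∧
     (∀ a : L, fhat neg (Box a) = boxOp (fiR neg Box) (fhat neg a)) ∧
     (∀ a : L, fhat neg (Dia a) = diaOp (fiLt neg) (fiQ neg Dia) (fhat neg a))) ∧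
    (∀ A : Set (FIX neg),
      (∃ a : L, fhat neg a = A) ↔
        (clOp (fiLt neg) A = A ∧
         @IsCompact _ (TopologicalSpace.generateFrom (Set.range (fhat neg))) A ∧
         @IsOpen _ (TopologicalSpace.generateFrom (Set.range (fhat neg))) A)) := by
  let := generateFrom (range (fhat neg))
  exact ⟨⟨isModalFrame_fiLt_fiR hneg1 hBoxMul hBoxTop,
      isAdditiveFrame_fiLt_fiQ hneg1 hDiaAdd hDiaBot⟩,
    ⟨fhat_injective hneg, clOp_fhat hneg1, fhat_inf, fhat_sup hneg hneg1, fhat_top,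
      fhat_bot hneg1, fhat_neg hneg, fhat_box hBoxMul hBoxTop,
      fhat_dia hneg hneg1 hDiaAdd hDiaBot⟩,
    exists_fhat_eq_iff isTopologicalBasis_range_fhat hneg hneg1⟩
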